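/- arXiv:1602.06031 — 3 statements merged into one kernel-verified Lean document; each statement's English description precedes it below -/
import Mathlib

section
/- Let n ≥ 3 and k be an integer with 1 < k < n/2, and let p satisfy nk/(n-2k) < p < (n+2)k/(n-2k). Then the initial value problem -(1/k)·C(n-1,k-1)·(r^{n-k}|u'(r)|^{k-1}u'(r))' = r^{n-1}·u(r)^p on (0,∞), with u(r) > 0 for all r ≥ 0, u'(0) = 0 and u(0) = ρ > 0, has no regular solution u. -/
/-!
Along a regular solution the flux `w = r^{n-k} |u'|^{k-1} u'` vanishes at `0` and decreases, so
`w < 0`, `u' < 0`, and the equation gives `(-u')^k ≳ r^k u^p`. Integrating this differential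
inequality yields the decay `u ≲ r^{-α}` with `α = 2k/(p-k)`; since `p > p_se`, it in turn gives
`-w ≲ r^{n-αp}` and `-u' ≲ r^{-(α+1)}` for `r ≥ 1`.

The Pohozaev function `P = (p+1)(k r w u' + (n-2k) w u) + (k/C(n-1,k-1)) (k+1) r^n u^{p+1}` tends
to `0` at `0` and satisfies `P' = (k/C(n-1,k-1)) ((k+1)n - (n-2k)(p+1)) r^{n-1} u^{p+1} > 0` when
`p < p_so`, so `P > 0` and `P` increases. On the other hand the decay bounds give
`P(r) ≲ r^{n-α(p+1)} → 0`, again because `p < p_so`.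
-/

open MeasureTheory Real Set Filter Asymptotics

noncomputable section

namespace KHessianPaper

/-- The binomial coefficient `C(n-1, k-1)` as a real number. -/
def binomC (n k : ℕ) : ℝ := ((n - 1).choose (k - 1) : ℝ)

/-- The flux `w(r) = r^{n-k} |u'(r)|^{k-1} u'(r)`. -/
def flux (n k : ℕ) (u : ℝ → ℝ) (r : ℝ) : ℝ :=
  r ^ (n - k) * |deriv u r| ^ (k - 1) * deriv u r

/-- `u` is a regular solution of the radial `k`-Hessian initial value problem
`-(1/k) C(n-1,k-1) (r^{n-k} |u'|^{k-1} u')' = r^{n-1} u^p`, `u > 0`, `u'(0) = 0`, `u(0) = ρ`. -/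
structure IsRegularSolution (n k : ℕ) (p ρ : ℝ) (u : ℝ → ℝ) : Prop where
  contDiffOn : ContDiffOn ℝ 1 u (Ici 0)
  deriv_zero : derivWithin u (Ici 0) 0 = 0
  init : u 0 = ρ
  pos : ∀ r : ℝ, 0 ≤ r → 0 < u r
  eqn : ∀ r : ℝ, 0 < r →
    HasDerivAt (flux n k u) (-((k : ℝ) / binomC n k) * r ^ (n - 1) * u r ^ p) r
  radial_smooth : ContDiff ℝ 2 (fun x : EuclideanSpace ℝ (Fin n) => -u ‖x‖)

/-- `φ : [0,∞) → ℝ` is the radial profile of a smooth compactly supported function on `ℝⁿ`. -/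
def MemWStar (n : ℕ) (φ : ℝ → ℝ) : Prop :=
  ∃ Φ : EuclideanSpace ℝ (Fin n) → ℝ,
    ContDiff ℝ (⊤ : ℕ∞) Φ ∧ HasCompactSupport Φ ∧ ∀ x, Φ x = φ ‖x‖

/-- The weak form of the equation tested against `φ`. -/
def WeakEqn (n k : ℕ) (p : ℝ) (u φ : ℝ → ℝ) : Prop :=
  ∫ r in Ioi (0 : ℝ),
      ((1 / (k : ℝ)) * binomC n k * r ^ (n - k) * |deriv u r| ^ (k - 1) * deriv u r
          * deriv φ r
        - r ^ (n - 1) * u r ^ p * φ r) = 0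

/-- The second-variation quadratic form `Q_u(φ)`. -/
def Qform (n k : ℕ) (p : ℝ) (u φ : ℝ → ℝ) : ℝ :=
  binomC n k * ∫ r in Ioi (0 : ℝ), r ^ (n - k) * |deriv u r| ^ (k - 1) * (deriv φ r) ^ 2
    - p * ∫ r in Ioi (0 : ℝ), r ^ (n - 1) * u r ^ (p - 1) * (φ r) ^ 2

/-- `u` is a positive stable solution of the radial `k`-Hessian equation. -/
def IsStableSolution (n k : ℕ) (p : ℝ) (u : ℝ → ℝ) : Prop :=
  (∀ r : ℝ, 0 < r → 0 < u r) ∧ ContDiffOn ℝ 1 u (Ioi 0) ∧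
  (∀ φ, MemWStar n φ → WeakEqn n k p u φ) ∧
  (∀ φ, MemWStar n φ → 0 ≤ Qform n k p u φ)

/-- `u` is a positive stable solution on `(R,∞)` of the radial `k`-Hessian equation. -/
def IsStableSolutionOn (n k : ℕ) (p : ℝ) (R : ℝ) (u : ℝ → ℝ) : Prop :=
  (∀ r : ℝ, 0 < r → 0 < u r) ∧ ContDiffOn ℝ 1 u (Ioi 0) ∧
  (∀ φ, MemWStar n φ → WeakEqn n k p u φ) ∧
  (∀ φ : ℝ → ℝ, ContDiff ℝ (⊤ : ℕ∞) φ → HasCompactSupport φ → tsupport φ ⊆ Ioi R →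
    0 ≤ Qform n k p u φ)

/-- The constant `A` in the singular solution `u_s(r) = A r^{-2k/(p-k)}`. -/
def Aconst (n k : ℕ) (p : ℝ) : ℝ :=
  ((1 / (k : ℝ)) * binomC n k) ^ (1 / (p - k))
    * (2 * (k : ℝ) / (p - (k : ℝ))) ^ ((k : ℝ) / (p - k))
    * ((n : ℝ) - 2 * p * k / (p - k)) ^ (1 / (p - k))

/-- The singular solution `u_s(r) = A r^{-2k/(p-k)}`. -/
def uSing (n k : ℕ) (p : ℝ) (r : ℝ) : ℝ := Aconst n k p * r ^ (-(2 * (k : ℝ) / (p - k)))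

/-- The Joseph–Lundgren exponent (finite form, relevant when `n > 2k+8`). -/
def pJL (n k : ℕ) : ℝ :=
  ((k : ℝ) * ((n : ℝ) ^ 2 - 2 * ((k : ℝ) + 3) * (n : ℝ) + 4 * (k : ℝ))
      + 4 * (k : ℝ) * Real.sqrt (2 * ((k : ℝ) + 1) * (n : ℝ) - 4 * (k : ℝ)))
    / (((n : ℝ) - 2 * (k : ℝ)) * ((n : ℝ) - 2 * (k : ℝ) - 8))

/-- The exponent `p* = k(n+2k)/(n-2k)`. -/
def pStar (n k : ℕ) : ℝ := (k : ℝ) * ((n : ℝ) + 2 * (k : ℝ)) / ((n : ℝ) - 2 * (k : ℝ))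

open Topology

theorem contDiffAt_of_contDiff_comp_norm {E : Type*} [NormedAddCommGroup E] [NormedSpace ℝ E]
    [Nontrivial E] {f : ℝ → ℝ} {m : WithTop ℕ∞} (hf : ContDiff ℝ m (fun x : E => f ‖x‖))
    {r : ℝ} (hr : 0 < r) : ContDiffAt ℝ m f r := by
  obtain ⟨v, hv⟩ := exists_norm_eq E zero_le_one
  have hline : ContDiff ℝ m (fun t : ℝ => f ‖t • v‖) := hf.comp (contDiff_id.smul contDiff_const)
  refine hline.contDiffAt.congr_of_eventuallyEq ?_
  filter_upwards [Ioi_mem_nhds hr] with t (ht : 0 < t)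
  simp [norm_smul, hv, abs_of_pos ht]

theorem binomC_pos {n k : ℕ} (hkn : k ≤ n) : 0 < binomC n k :=
  Nat.cast_pos.mpr (Nat.choose_pos (Nat.sub_le_sub_right hkn 1))

theorem tendsto_pow_nhdsGT_zero {n : ℕ} (hn : n ≠ 0) :
    Tendsto (fun s : ℝ => s ^ n) (𝓝[>] 0) (𝓝 0) := by
  simpa [zero_pow hn] using ((continuous_pow n).tendsto (0 : ℝ)).mono_left nhdsWithin_le_nhds

theorem tendsto_flux_nhdsGT_zero {n k : ℕ} {f : ℝ → ℝ}
    (hf : Tendsto (deriv f) (𝓝[>] 0) (𝓝 0)) : Tendsto (flux n k f) (𝓝[>] 0) (𝓝 0) := by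
  have hpow : Tendsto (fun s : ℝ => s ^ (n - k)) (𝓝[>] 0) (𝓝 (0 ^ (n - k))) :=
    ((continuous_pow _).tendsto 0).mono_left nhdsWithin_le_nhds
  show Tendsto (fun s => s ^ (n - k) * |deriv f s| ^ (k - 1) * deriv f s) _ _
  simpa using (hpow.mul (hf.abs.pow (k - 1))).mul hf

theorem flux_eq_neg_pow {n k : ℕ} {f : ℝ → ℝ} {r : ℝ} (hk : 0 < k) (hf : deriv f r < 0) :
    flux n k f r = -(r ^ (n - k) * (-deriv f r) ^ k) := by
  obtain ⟨j, rfl⟩ := Nat.exists_eq_add_of_lt hk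
  simp only [flux, abs_of_neg hf, zero_add, Nat.add_sub_cancel, pow_succ]
  ring

theorem flux_mul_deriv_deriv_eq {n k : ℕ} {f : ℝ → ℝ} {r w' : ℝ} (hk : 0 < k)
    (hf : DifferentiableAt ℝ (deriv f) r) (hneg : ∀ᶠ s in 𝓝 r, deriv f s < 0)
    (hw : HasDerivAt (flux n k f) w' r) :
    k * r * flux n k f r * deriv (deriv f) r
      = r * w' * deriv f r - ((n - k : ℕ) : ℝ) * flux n k f r * deriv f r := by
  have hloc : flux n k f =ᶠ[𝓝 r] fun s => -(s ^ (n - k) * (-deriv f s) ^ k) := by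
    filter_upwards [hneg] with s hs using flux_eq_neg_pow hk hs
  have hw_loc := (((hasDerivAt_pow (n - k) r).mul
    (hf.hasDerivAt.neg.pow k)).neg).congr_of_eventuallyEq hloc
  rw [← hw_loc.unique hw, flux_eq_neg_pow hk hneg.self_of_nhds]
  obtain ⟨j, rfl⟩ : ∃ j, k = j + 1 := ⟨k - 1, by omega⟩
  generalize n - (j + 1) = m
  rcases m with _ | i <;>
  · simp only [Pi.neg_apply, Pi.pow_apply, Nat.add_sub_cancel, pow_succ]
    push_cast
    ring

theorem StrictMonoOn.pos_of_tendsto_nhdsGT {f : ℝ → ℝ} {a r : ℝ} (hf : StrictMonoOn f (Ioi a))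
    (h : Tendsto f (𝓝[>] a) (𝓝 0)) (hr : a < r) : 0 < f r := by
  have hm : a < (a + r) / 2 := by linarith
  have hfm : 0 ≤ f ((a + r) / 2) := by
    refine le_of_tendsto h ?_
    filter_upwards [Ioo_mem_nhdsGT hm] with s hs
    exact (hf hs.1 hm hs.2).le
  exact hfm.trans_lt (hf hm hr (by linarith))

theorem exists_le_mul_rpow_of_mul_rpow_le_neg_deriv {u : ℝ → ℝ} {c γ : ℝ} (hγ : 1 < γ) (hc : 0 < c)
    (hcont : ContinuousOn u (Ici 0)) (hpos : ∀ r, 0 ≤ r → 0 < u r)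
    (hdiff : ∀ r, 0 < r → HasDerivAt u (deriv u r) r)
    (hle : ∀ r, 0 < r → c * r * u r ^ γ ≤ -deriv u r) :
    ∃ C > 0, ∀ r, 0 < r → u r ≤ C * r ^ (-(2 / (γ - 1))) := by
  set β := γ - 1 with hβ_def
  have hβ : 0 < β := by linarith
  set B := β * c / 2 with hB_def
  have hB : 0 < B := by positivity
  have hV : MonotoneOn (fun s => u s ^ (-β) - B * s ^ 2) (Ici 0) := by
    have hd : ∀ s, 0 < s → HasDerivAt (fun s => u s ^ (-β) - B * s ^ 2)
        (deriv u s * -β * u s ^ (-β - 1) - B * (2 * s)) s := fun s hs => by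
      refine (((hdiff s hs).rpow_const (Or.inl (hpos s hs.le).ne')).sub
        ((hasDerivAt_pow 2 s).const_mul B)).congr_deriv ?_
      norm_num
    refine monotoneOn_of_deriv_nonneg (convex_Ici 0)
      ((hcont.rpow_const fun s hs => Or.inl (hpos s hs).ne').sub (by fun_prop))
      (fun s hs => ?_) fun s hs => ?_
    · rw [interior_Ici] at hs
      exact (hd s hs).differentiableAt.differentiableWithinAt
    rw [interior_Ici] at hs
    have hus := hpos s (le_of_lt hs)
    have hcancel : u s ^ (-β - 1) * u s ^ γ = 1 := by
      rw [← rpow_add hus, hβ_def, show -(γ - 1) - 1 + γ = 0 by ring, rpow_zero]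
    have h := mul_le_mul_of_nonneg_left (hle s hs) (by positivity : 0 ≤ β * u s ^ (-β - 1))
    rw [show β * u s ^ (-β - 1) * (c * s * u s ^ γ) = β * c * s by
      linear_combination β * c * s * hcancel] at h
    rw [(hd s hs).deriv, hB_def]
    linarith
  refine ⟨B ^ (-β⁻¹), by positivity, fun r hr => ?_⟩
  have hur := hpos r hr.le
  have hBr : B * r ^ 2 ≤ u r ^ (-β) := by
    have h := hV self_mem_Ici hr.le hr.le
    have : 0 < u 0 ^ (-β) := rpow_pos_of_pos (hpos 0 le_rfl) _
    simp only at h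
    linarith
  calc u r = (u r ^ (-β)) ^ (-β⁻¹) := by
        rw [← rpow_mul hur.le, neg_mul_neg, mul_inv_cancel₀ hβ.ne', rpow_one]
    _ ≤ (B * r ^ 2) ^ (-β⁻¹) := rpow_le_rpow_of_nonpos (by positivity) hBr (by simpa using hβ.le)
    _ = B ^ (-β⁻¹) * r ^ (-(2 / β)) := by
        rw [mul_rpow hB.le (by positivity), ← rpow_natCast, ← rpow_mul hr.le]
        congr 2
        field_simp
        norm_num

theorem exists_le_mul_rpow_of_hasDerivAt_le {w w' : ℝ → ℝ} {A σ : ℝ} (hσ : 0 < σ)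
    (hw : ∀ r, 1 ≤ r → HasDerivAt w (w' r) r) (hle : ∀ r, 1 ≤ r → w' r ≤ A * r ^ (σ - 1)) :
    ∃ C, ∀ r, 1 ≤ r → w r ≤ C * r ^ σ := by
  set g : ℝ → ℝ := fun r => w r - A / σ * r ^ σ
  have hd : ∀ r, 1 ≤ r → HasDerivAt g (w' r - A / σ * (σ * r ^ (σ - 1))) r := fun r hr =>
    (hw r hr).sub ((hasDerivAt_rpow_const (Or.inl (by positivity))).const_mul _)
  have hanti : AntitoneOn g (Ici 1) := by
    refine antitoneOn_of_deriv_nonpos (convex_Ici 1)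
      (fun r hr => (hd r hr).continuousAt.continuousWithinAt) (fun r hr => ?_) fun r hr => ?_
    · rw [interior_Ici] at hr
      exact (hd r hr.le).differentiableAt.differentiableWithinAt
    rw [interior_Ici] at hr
    rw [(hd r hr.le).deriv, show A / σ * (σ * r ^ (σ - 1)) = A * r ^ (σ - 1) by field_simp]
    linarith [hle r hr.le]
  refine ⟨|g 1| + A / σ, fun r hr => ?_⟩
  have hr1 : 1 ≤ r ^ σ := one_le_rpow hr hσ.le
  have hgr : g r ≤ |g 1| * r ^ σ := (hanti self_mem_Ici hr hr).trans
    ((le_abs_self _).trans (le_mul_of_one_le_right (abs_nonneg _) hr1))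
  simp only [g] at hgr
  linarith

def pohozaev (n k : ℕ) (p : ℝ) (u : ℝ → ℝ) (r : ℝ) : ℝ :=
  (p + 1) * (k * r * flux n k u r * deriv u r + ((n : ℝ) - 2 * k) * flux n k u r * u r)
    + k / binomC n k * (k + 1) * r ^ n * u r ^ (p + 1)

namespace IsRegularSolution

variable {n k : ℕ} {p ρ : ℝ} {u : ℝ → ℝ}

theorem hasDerivAt (hu : IsRegularSolution n k p ρ u) {r : ℝ} (hr : 0 < r) :
    HasDerivAt u (deriv u r) r :=
  ((hu.contDiffOn.differentiableOn one_ne_zero r hr.le).differentiableAt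
    (Ici_mem_nhds hr)).hasDerivAt

theorem differentiableAt_deriv (hu : IsRegularSolution n k p ρ u) (hn : 0 < n) {r : ℝ}
    (hr : 0 < r) : DifferentiableAt ℝ (deriv u) r := by
  have : Nonempty (Fin n) := ⟨⟨0, hn⟩⟩
  have hu2 : ContDiffOn ℝ 2 u (Ioi 0) := fun s hs =>
    (contDiffAt_of_contDiff_comp_norm (E := EuclideanSpace ℝ (Fin n))
      (by simpa using hu.radial_smooth.neg) hs).contDiffWithinAt
  have hu'1 := ((contDiffOn_succ_iff_deriv_of_isOpen (n := 1) isOpen_Ioi).mp hu2).2.2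
  exact (hu'1.differentiableOn one_ne_zero r hr).differentiableAt (Ioi_mem_nhds hr)

theorem tendsto_nhdsGT_zero (hu : IsRegularSolution n k p ρ u) :
    Tendsto u (𝓝[>] 0) (𝓝 ρ) := by
  have h := hu.contDiffOn.continuousOn.continuousWithinAt (self_mem_Ici (a := (0 : ℝ)))
  rw [ContinuousWithinAt, hu.init] at h
  exact h.mono_left (nhdsWithin_mono _ Ioi_subset_Ici_self)

theorem tendsto_deriv_nhdsGT_zero (hu : IsRegularSolution n k p ρ u) :
    Tendsto (deriv u) (𝓝[>] 0) (𝓝 0) := by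
  have hcont : ContinuousOn (derivWithin u (Ici 0)) (Ici 0) :=
    hu.contDiffOn.continuousOn_derivWithin (uniqueDiffOn_Ici 0) le_rfl
  have h := (hcont 0 self_mem_Ici).tendsto
  rw [hu.deriv_zero] at h
  refine (h.mono_left (nhdsWithin_mono _ Ioi_subset_Ici_self)).congr' ?_
  filter_upwards [self_mem_nhdsWithin] with s (hs : 0 < s)
  exact derivWithin_of_mem_nhds (Ici_mem_nhds hs)

theorem strictAntiOn_flux (hu : IsRegularSolution n k p ρ u) (hk : 0 < k) (hkn : k ≤ n) :
    StrictAntiOn (flux n k u) (Ioi 0) := by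
  refine strictAntiOn_of_deriv_neg (convex_Ioi 0)
    (fun r hr => (hu.eqn r hr).continuousAt.continuousWithinAt) fun r hr => ?_
  rw [interior_Ioi] at hr
  have hlam : 0 < (k : ℝ) / binomC n k := div_pos (Nat.cast_pos.mpr hk) (binomC_pos hkn)
  rw [(hu.eqn r hr).deriv, neg_mul, neg_mul, neg_lt_zero]
  exact mul_pos (mul_pos hlam (pow_pos hr _)) (rpow_pos_of_pos (hu.pos r hr.le) _)

theorem flux_neg (hu : IsRegularSolution n k p ρ u) (hk : 0 < k) (hkn : k ≤ n) {r : ℝ}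
    (hr : 0 < r) : flux n k u r < 0 := by
  have h := StrictMonoOn.pos_of_tendsto_nhdsGT (f := fun s => -flux n k u s)
    (hu.strictAntiOn_flux hk hkn).neg
    (by simpa using (tendsto_flux_nhdsGT_zero hu.tendsto_deriv_nhdsGT_zero).neg) hr
  simpa using h

theorem deriv_neg (hu : IsRegularSolution n k p ρ u) (hk : 0 < k) (hkn : k ≤ n) {r : ℝ}
    (hr : 0 < r) : deriv u r < 0 := by
  by_contra! h
  have : 0 ≤ flux n k u r := mul_nonneg (by positivity) h
  exact this.not_gt (hu.flux_neg hk hkn hr)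

theorem strictAntiOn (hu : IsRegularSolution n k p ρ u) (hk : 0 < k) (hkn : k ≤ n) :
    StrictAntiOn u (Ici 0) := by
  refine strictAntiOn_of_deriv_neg (convex_Ici 0) hu.contDiffOn.continuousOn fun r hr => ?_
  rw [interior_Ici] at hr
  rw [(hu.hasDerivAt hr).deriv]
  exact hu.deriv_neg hk hkn hr

theorem mul_pow_mul_rpow_le_neg_flux (hu : IsRegularSolution n k p ρ u) (hk : 0 < k)
    (hkn : k ≤ n) (hp : 0 ≤ p) {r : ℝ} (hr : 0 < r) :
    (k : ℝ) / binomC n k / n * r ^ n * u r ^ p ≤ -flux n k u r := by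
  set c := (k : ℝ) / binomC n k
  have hc0 : 0 < c := div_pos (Nat.cast_pos.mpr hk) (binomC_pos hkn)
  have hn : (n : ℝ) ≠ 0 := by norm_cast; omega
  set g : ℝ → ℝ := fun s => flux n k u s + c / n * u r ^ p * s ^ n
  have hg : ∀ s, 0 < s → HasDerivAt g (-c * s ^ (n - 1) * u s ^ p
      + c / n * u r ^ p * (n * s ^ (n - 1))) s := fun s hs =>
    (hu.eqn s hs).add ((hasDerivAt_pow n s).const_mul _)
  -- `g` is nonincreasing on `(0, r]` because `u` is, and `g (0+) = 0`
  have hanti : AntitoneOn g (Ioc 0 r) := by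
    refine antitoneOn_of_deriv_nonpos (convex_Ioc 0 r)
      (fun s hs => (hg s hs.1).continuousAt.continuousWithinAt)
      (fun s hs => ?_) fun s hs => ?_
    · rw [interior_Ioc] at hs
      exact (hg s hs.1).differentiableAt.differentiableWithinAt
    rw [interior_Ioc] at hs
    have hus : u r ^ p ≤ u s ^ p := rpow_le_rpow (hu.pos r hr.le).le
      ((hu.strictAntiOn hk hkn) hs.1.le hr.le hs.2).le hp
    have hc : 0 ≤ c * s ^ (n - 1) := mul_nonneg hc0.le (pow_nonneg hs.1.le _)
    rw [(hg s hs.1).deriv]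
    calc -c * s ^ (n - 1) * u s ^ p + c / n * u r ^ p * (n * s ^ (n - 1))
        = c * s ^ (n - 1) * (u r ^ p - u s ^ p) := by field_simp; ring
      _ ≤ 0 := mul_nonpos_of_nonneg_of_nonpos hc (by linarith)
  have hg0 : Tendsto g (𝓝[>] 0) (𝓝 0) := by
    simpa using (tendsto_flux_nhdsGT_zero hu.tendsto_deriv_nhdsGT_zero).add
      ((tendsto_pow_nhdsGT_zero (by omega : n ≠ 0)).const_mul (c / n * u r ^ p))
  have hgr : g r ≤ 0 := by
    refine ge_of_tendsto hg0 ?_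
    filter_upwards [Ioo_mem_nhdsGT hr] with s hs
    exact hanti ⟨hs.1, hs.2.le⟩ ⟨hr, le_rfl⟩ hs.2.le
  simp only [g] at hgr
  linarith

theorem exists_mul_rpow_le_neg_deriv (hu : IsRegularSolution n k p ρ u) (hk : 0 < k)
    (hkn : k ≤ n) (hp : 0 ≤ p) :
    ∃ c > 0, ∀ r, 0 < r → c * r * u r ^ (p / k) ≤ -deriv u r := by
  have hc : 0 < (k : ℝ) / binomC n k / n := by
    have := binomC_pos hkn
    have : 0 < n := by omega
    positivity
  refine ⟨((k : ℝ) / binomC n k / n) ^ (k⁻¹ : ℝ), rpow_pos_of_pos hc _, fun r hr => ?_⟩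
  have hur := hu.pos r hr.le
  have hX : 0 < -deriv u r := neg_pos.mpr (hu.deriv_neg hk hkn hr)
  have h := hu.mul_pow_mul_rpow_le_neg_flux hk hkn hp hr
  rw [flux_eq_neg_pow hk (hu.deriv_neg hk hkn hr), neg_neg,
    show r ^ n = r ^ (n - k) * r ^ k by rw [← pow_add, Nat.sub_add_cancel hkn]] at h
  have hpow : (((k : ℝ) / binomC n k / n) ^ (k⁻¹ : ℝ) * r * u r ^ (p / k)) ^ k
      = (k : ℝ) / binomC n k / n * r ^ k * u r ^ p := by
    rw [mul_pow, mul_pow, rpow_inv_natCast_pow hc.le hk.ne', ← rpow_natCast (u r ^ (p / k)) k,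
      ← rpow_mul hur.le, div_mul_cancel₀ _ (Nat.cast_ne_zero.mpr hk.ne')]
  refine (pow_le_pow_iff_left₀ (by positivity) hX.le hk.ne').mp ?_
  rw [hpow]
  refine le_of_mul_le_mul_left ?_ (pow_pos hr (n - k))
  linarith

theorem exists_le_mul_rpow (hu : IsRegularSolution n k p ρ u) (hk : 0 < k) (hkn : k ≤ n)
    (hkp : (k : ℝ) < p) : ∃ C > 0, ∀ r, 0 < r → u r ≤ C * r ^ (-(2 * k / (p - k))) := by
  have hk' : (0 : ℝ) < k := Nat.cast_pos.mpr hk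
  obtain ⟨c, hc, hbound⟩ := hu.exists_mul_rpow_le_neg_deriv hk hkn (by linarith)
  obtain ⟨C, hC, hdecay⟩ := exists_le_mul_rpow_of_mul_rpow_le_neg_deriv
    ((one_lt_div hk').mpr hkp) hc hu.contDiffOn.continuousOn hu.pos (fun r hr => hu.hasDerivAt hr) hbound
  refine ⟨C, hC, fun r hr => (hdecay r hr).trans_eq ?_⟩
  congr 3
  field_simp

theorem exists_neg_flux_le_mul_rpow (hu : IsRegularSolution n k p ρ u) (hk : 0 < k)
    (hkn : k ≤ n) (hkp : (k : ℝ) < p) (hp : (n : ℝ) * k < p * (n - 2 * k)) :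
    ∃ C, ∀ r, 1 ≤ r → -flux n k u r ≤ C * r ^ ((n : ℝ) - 2 * k / (p - k) * p) := by
  have hpk : 0 < p - k := by linarith
  set σ := (n : ℝ) - 2 * k / (p - k) * p with hσ_def
  have hσ : 0 < σ := by
    rw [hσ_def, div_mul_eq_mul_div, sub_pos, div_lt_iff₀ hpk]
    linarith
  have hlam : 0 ≤ (k : ℝ) / binomC n k := div_nonneg (Nat.cast_nonneg k) (binomC_pos hkn).le
  obtain ⟨C, hC, hdecay⟩ := hu.exists_le_mul_rpow hk hkn hkp
  refine exists_le_mul_rpow_of_hasDerivAt_le hσ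
    (w' := fun r => k / binomC n k * r ^ (n - 1) * u r ^ p) (A := k / binomC n k * C ^ p)
    (fun r hr => ((hu.eqn r (by linarith)).neg).congr_deriv (by ring)) fun r hr => ?_
  have hr0 : 0 < r := by linarith
  have hup : u r ^ p ≤ C ^ p * r ^ (-(2 * k / (p - k)) * p) := by
    rw [rpow_mul hr0.le, ← mul_rpow hC.le (by positivity)]
    exact rpow_le_rpow (hu.pos r hr0.le).le (hdecay r hr0) (by linarith)
  have hpow : r ^ (n - 1) * r ^ (-(2 * k / (p - k)) * p) = r ^ (σ - 1) := by
    rw [← rpow_natCast, ← rpow_add hr0, Nat.cast_sub (by omega), hσ_def]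
    congr 1
    push_cast
    ring
  calc k / binomC n k * r ^ (n - 1) * u r ^ p
      ≤ k / binomC n k * r ^ (n - 1) * (C ^ p * r ^ (-(2 * k / (p - k)) * p)) := by gcongr
    _ = k / binomC n k * C ^ p * r ^ (σ - 1) := by rw [← hpow]; ring

theorem exists_neg_deriv_le_mul_rpow (hu : IsRegularSolution n k p ρ u) (hk : 0 < k)
    (hkn : k ≤ n) (hkp : (k : ℝ) < p) (hp : (n : ℝ) * k < p * (n - 2 * k)) :
    ∃ C, ∀ r, 1 ≤ r → -deriv u r ≤ C * r ^ (-(2 * k / (p - k) + 1)) := by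
  obtain ⟨C, hC⟩ := hu.exists_neg_flux_le_mul_rpow hk hkn hkp hp
  have hC0 : 0 ≤ C := by
    have h1 := (neg_pos.mpr (hu.flux_neg hk hkn one_pos)).trans_le (hC 1 le_rfl)
    rw [one_rpow, mul_one] at h1
    exact h1.le
  refine ⟨C ^ (k⁻¹ : ℝ), fun r hr => ?_⟩
  have hr0 : 0 < r := by linarith
  have hX : 0 < -deriv u r := neg_pos.mpr (hu.deriv_neg hk hkn hr0)
  have h := hC r hr
  rw [flux_eq_neg_pow hk (hu.deriv_neg hk hkn hr0), neg_neg, ← rpow_natCast r (n - k),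
    Nat.cast_sub hkn, mul_comm, ← le_div_iff₀ (by positivity), mul_div_assoc, ← rpow_sub hr0]
    at h
  refine (pow_le_pow_iff_left₀ hX.le (by positivity) hk.ne').mp (h.trans_eq ?_)
  rw [mul_pow, rpow_inv_natCast_pow hC0 hk.ne', ← rpow_natCast _ k, ← rpow_mul hr0.le]
  congr 2
  have : (p - k) ≠ 0 := by linarith
  field_simp
  ring

theorem hasDerivAt_pohozaev (hu : IsRegularSolution n k p ρ u) (hk : 0 < k) (hkn : k ≤ n)
    {r : ℝ} (hr : 0 < r) :
    HasDerivAt (pohozaev n k p u) (k / binomC n k * ((k + 1) * n - ((n : ℝ) - 2 * k) * (p + 1))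
      * r ^ (n - 1) * u r ^ (p + 1)) r := by
  have hur := hu.pos r hr.le
  have hu' := hu.hasDerivAt hr
  have hu'' := hu.differentiableAt_deriv (by omega) hr
  have hw := hu.eqn r hr
  have key := flux_mul_deriv_deriv_eq hk hu'' (eventually_of_mem (Ioi_mem_nhds hr)
    fun s hs => hu.deriv_neg hk hkn hs) hw
  have hP : HasDerivAt (pohozaev n k p u) _ r :=
    (((((hasDerivAt_id' r).const_mul (k : ℝ)).mul hw).mul hu''.hasDerivAt).add
      ((hw.const_mul ((n : ℝ) - 2 * k)).mul hu')).const_mul (p + 1) |>.add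
      (((hasDerivAt_pow n r).const_mul (k / binomC n k * (k + 1))).mul
        (hu'.rpow_const (p := p + 1) (Or.inl hur.ne')))
  refine hP.congr_deriv ?_
  rw [add_sub_cancel_right, rpow_add_one hur.ne', Nat.cast_sub hkn] at *
  rw [show r ^ n = r ^ (n - 1) * r by rw [← pow_succ, Nat.sub_add_cancel (by omega)]]
  simp only [Pi.mul_apply]
  linear_combination (p + 1) * key

theorem strictMonoOn_pohozaev (hu : IsRegularSolution n k p ρ u) (hk : 0 < k) (hkn : k ≤ n)
    (hp : p * (n - 2 * k) < (n + 2) * k) : StrictMonoOn (pohozaev n k p u) (Ioi 0) := by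
  have hμ : 0 < (k : ℝ) / binomC n k * ((k + 1) * n - ((n : ℝ) - 2 * k) * (p + 1)) :=
    mul_pos (div_pos (Nat.cast_pos.mpr hk) (binomC_pos hkn)) (by linarith)
  refine strictMonoOn_of_deriv_pos (convex_Ioi 0)
    (fun r hr => (hu.hasDerivAt_pohozaev hk hkn hr).continuousAt.continuousWithinAt)
    fun r hr => ?_
  rw [interior_Ioi] at hr
  rw [(hu.hasDerivAt_pohozaev hk hkn hr).deriv]
  exact mul_pos (mul_pos hμ (pow_pos hr _)) (rpow_pos_of_pos (hu.pos r hr.le) _)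

theorem tendsto_pohozaev_nhdsGT_zero (hu : IsRegularSolution n k p ρ u) (hn : n ≠ 0) :
    Tendsto (pohozaev n k p u) (𝓝[>] 0) (𝓝 0) := by
  have hρ : 0 < ρ := hu.init ▸ hu.pos 0 le_rfl
  have hid : Tendsto (fun s : ℝ => s) (𝓝[>] 0) (𝓝 0) := tendsto_nhdsWithin_of_tendsto_nhds
    tendsto_id
  have hw := tendsto_flux_nhdsGT_zero (n := n) (k := k) hu.tendsto_deriv_nhdsGT_zero
  unfold pohozaev
  simpa using ((((hid.const_mul (k : ℝ)).mul hw).mul hu.tendsto_deriv_nhdsGT_zero).add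
    ((hw.const_mul ((n : ℝ) - 2 * k)).mul hu.tendsto_nhdsGT_zero)).const_mul (p + 1) |>.add
    (((tendsto_pow_nhdsGT_zero hn).const_mul (k / binomC n k * (k + 1))).mul
      (hu.tendsto_nhdsGT_zero.rpow_const (p := p + 1) (Or.inl hρ.ne')))

theorem exists_pohozaev_le_mul_rpow (hu : IsRegularSolution n k p ρ u) (hk : 0 < k)
    (hkn : 2 * k ≤ n) (hkp : (k : ℝ) < p) (hp : (n : ℝ) * k < p * (n - 2 * k)) :
    ∃ K, ∀ r, 1 ≤ r → pohozaev n k p u r ≤ K * r ^ ((n : ℝ) - 2 * k / (p - k) * (p + 1)) := by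
  have hkn' : k ≤ n := by omega
  set α := 2 * (k : ℝ) / (p - k)
  obtain ⟨C₀, hC₀, hu_le⟩ := hu.exists_le_mul_rpow hk hkn' hkp
  obtain ⟨C₁, hw_le⟩ := hu.exists_neg_flux_le_mul_rpow hk hkn' hkp hp
  obtain ⟨C₂, hu'_le⟩ := hu.exists_neg_deriv_le_mul_rpow hk hkn' hkp hp
  have hlam : 0 ≤ (k : ℝ) / binomC n k * (k + 1) := by
    have := binomC_pos hkn'
    positivity
  refine ⟨(p + 1) * k * (C₁ * C₂) + k / binomC n k * (k + 1) * C₀ ^ (p + 1), fun r hr => ?_⟩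
  have hr0 : 0 < r := by linarith
  have hur := hu.pos r hr0.le
  have hw := hu.flux_neg hk hkn' hr0
  have hu' := hu.deriv_neg hk hkn' hr0
  have hflux_term : r * flux n k u r * deriv u r ≤ C₁ * C₂ * r ^ ((n : ℝ) - α * (p + 1)) := by
    have h := mul_le_mul (hw_le r hr) (hu'_le r hr) (by linarith)
      ((neg_pos.mpr hw).le.trans (hw_le r hr))
    have hexp : r * (r ^ ((n : ℝ) - α * p) * r ^ (-(α + 1))) = r ^ ((n : ℝ) - α * (p + 1)) := by
      rw [← rpow_add hr0, mul_comm, ← rpow_add_one hr0.ne']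
      congr 1
      ring
    calc r * flux n k u r * deriv u r = r * (-flux n k u r * -deriv u r) := by ring
      _ ≤ r * (C₁ * r ^ ((n : ℝ) - α * p) * (C₂ * r ^ (-(α + 1)))) :=
        mul_le_mul_of_nonneg_left h hr0.le
      _ = C₁ * C₂ * r ^ ((n : ℝ) - α * (p + 1)) := by rw [← hexp]; ring
  have h2k : (0 : ℝ) ≤ n - 2 * k := by
    rw [sub_nonneg]
    exact_mod_cast hkn
  have hmid_term : ((n : ℝ) - 2 * k) * flux n k u r * u r ≤ 0 :=
    mul_nonpos_of_nonpos_of_nonneg (mul_nonpos_of_nonneg_of_nonpos h2k hw.le) hur.le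
  have hpow_term : r ^ n * u r ^ (p + 1) ≤ C₀ ^ (p + 1) * r ^ ((n : ℝ) - α * (p + 1)) := by
    have h : u r ^ (p + 1) ≤ C₀ ^ (p + 1) * r ^ (-α * (p + 1)) := by
      rw [rpow_mul hr0.le, ← mul_rpow hC₀.le (by positivity)]
      exact rpow_le_rpow hur.le (hu_le r hr0) (by linarith)
    calc r ^ n * u r ^ (p + 1) ≤ r ^ n * (C₀ ^ (p + 1) * r ^ (-α * (p + 1))) := by gcongr
      _ = C₀ ^ (p + 1) * r ^ ((n : ℝ) - α * (p + 1)) := by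
        rw [← rpow_natCast, sub_eq_add_neg, rpow_add hr0, neg_mul]
        ring
  have hp1 : 0 ≤ p + 1 := by linarith
  calc pohozaev n k p u r
      = (p + 1) * k * (r * flux n k u r * deriv u r)
        + (p + 1) * (((n : ℝ) - 2 * k) * flux n k u r * u r)
        + k / binomC n k * (k + 1) * (r ^ n * u r ^ (p + 1)) := by unfold pohozaev; ring
    _ ≤ (p + 1) * k * (C₁ * C₂ * r ^ ((n : ℝ) - α * (p + 1))) + (p + 1) * 0
        + k / binomC n k * (k + 1) * (C₀ ^ (p + 1) * r ^ ((n : ℝ) - α * (p + 1))) := by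
      gcongr
    _ = _ := by ring

end IsRegularSolution

theorem no_regular_solution_subcritical_general (n k : ℕ) (p ρ : ℝ)
    (hk2 : 2 * k < n)
    (hp1 : (n : ℝ) * k / ((n : ℝ) - 2 * k) < p)
    (hp2 : p < ((n : ℝ) + 2) * k / ((n : ℝ) - 2 * k)) :
    ¬ ∃ u : ℝ → ℝ, IsRegularSolution n k p ρ u := by
  rintro ⟨u, hu⟩
  have hd : (0 : ℝ) < n - 2 * k := by
    rw [sub_pos]
    exact_mod_cast hk2
  rw [div_lt_iff₀ hd] at hp1
  rw [lt_div_iff₀ hd] at hp2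
  have hk : 0 < k := Nat.pos_of_ne_zero fun hk0 => by
    subst hk0
    simp only [CharP.cast_eq_zero, mul_zero] at hp1 hp2
    linarith
  have hkp : (k : ℝ) < p := by nlinarith
  have hε : (n : ℝ) - 2 * k / (p - k) * (p + 1) < 0 := by
    rw [div_mul_eq_mul_div, sub_neg, lt_div_iff₀ (by linarith)]
    linarith
  obtain ⟨K, hK⟩ := hu.exists_pohozaev_le_mul_rpow hk hk2.le hkp hp1
  have hmono := hu.strictMonoOn_pohozaev hk (by omega) hp2
  have hP1 : 0 < pohozaev n k p u 1 :=
    StrictMonoOn.pos_of_tendsto_nhdsGT hmono (hu.tendsto_pohozaev_nhdsGT_zero (by omega)) one_pos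
  have hlim : Tendsto (fun r : ℝ => K * r ^ ((n : ℝ) - 2 * k / (p - k) * (p + 1))) atTop (𝓝 0) := by
    simpa using (tendsto_rpow_neg_atTop (neg_pos.mpr hε)).const_mul K
  obtain ⟨r, hr, hsmall⟩ :=
    ((eventually_gt_atTop 1).and (hlim.eventually_lt_const hP1)).exists
  have hPr : pohozaev n k p u 1 < pohozaev n k p u r :=
    hmono (mem_Ioi.mpr one_pos) (mem_Ioi.mpr (by linarith)) hr
  exact (hsmall.trans hPr).not_ge (hK r hr.le)

/-- no regular solution in the subcritical range `p_se < p < p_so`. -/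
theorem no_regular_solution_subcritical (n k : ℕ) (p ρ : ℝ)
    (hn : 3 ≤ n) (hk1 : 1 < k) (hk2 : 2 * k < n) (hρ : 0 < ρ)
    (hp1 : (n : ℝ) * k / ((n : ℝ) - 2 * k) < p)
    (hp2 : p < ((n : ℝ) + 2) * k / ((n : ℝ) - 2 * k)) :
    ¬ ∃ u : ℝ → ℝ, IsRegularSolution n k p ρ u :=
  no_regular_solution_subcritical_general n k p ρ hk2 hp1 hp2

end KHessianPaper
end
end

section
/- Let n ≥ 3, k an integer with 1 < k < n/2, and p = (n+2)k/(n-2k). Then for every ρ > 0 the function u_ρ(r) = ((1/k)·C(n-1,k-1))^{1/(p-k)}·ρ·(1 + (k/(n^{1/k}(n-2k)))·(ρ^{(k+1)/(n-2k)}·r)²)^{-(n-2k)/(2k)} is a regular solution of the initial value problem -(1/k)·C(n-1,k-1)·(r^{n-k}|u'|^{k-1}u')' = r^{n-1}u^p, u > 0, u'(0) = 0, with u_ρ(0) = ((1/k)·C(n-1,k-1))^{1/(p-k)}·ρ. -/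
/-!
The solution is a Bliss-type bubble `u(r) = a (1 + B r²)^α` with `α < 0`. Its derivative is
`-D r (1 + B r²)^(α-1)` with `D = -2aαB > 0`, so its flux is `-Dᵏ rⁿ (1 + B r²)^((α-1)k)`.
For `(α-1)k = -n/2` the derivative of the flux collapses to `-n Dᵏ rⁿ⁻¹ (1 + B r²)^(-n/2-1)`, which
matches `rⁿ⁻¹ uᵖ` because `αp = -n/2 - 1` exactly at the critical exponent; the remaining
constant identity `n Dᵏ = (k / C(n-1,k-1)) aᵖ` is what fixes the scalings of `a` and `B` in `u_ρ`.
-/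

open MeasureTheory Real Set Filter Asymptotics

noncomputable section

namespace KHessianPaper

def bubble (a B α r : ℝ) : ℝ := a * (1 + B * r ^ 2) ^ α

section Bubble

variable {a B α : ℝ}

lemma one_add_mul_sq_pos (hB : 0 ≤ B) (r : ℝ) : 0 < 1 + B * r ^ 2 := by positivity

lemma hasDerivAt_one_add_mul_sq_rpow (hB : 0 ≤ B) (c r : ℝ) :
    HasDerivAt (fun t => (1 + B * t ^ 2) ^ c) (2 * B * r * c * (1 + B * r ^ 2) ^ (c - 1)) r := by
  have h : HasDerivAt (fun t => 1 + B * t ^ 2) (2 * B * r) r := by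
    simpa [mul_comm, mul_left_comm] using ((hasDerivAt_pow 2 r).const_mul B).const_add 1
  exact h.rpow_const (Or.inl (one_add_mul_sq_pos hB r).ne')

lemma hasDerivAt_bubble (hB : 0 ≤ B) (r : ℝ) :
    HasDerivAt (bubble a B α) (2 * a * α * B * r * (1 + B * r ^ 2) ^ (α - 1)) r :=
  ((hasDerivAt_one_add_mul_sq_rpow hB α r).const_mul a).congr_deriv (by ring)

lemma contDiff_bubble_comp {E : Type*} [NormedAddCommGroup E] [NormedSpace ℝ E] {f : E → ℝ}
    {m : WithTop ℕ∞} (hB : 0 ≤ B) (hf : ContDiff ℝ m fun x => f x ^ 2) :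
    ContDiff ℝ m fun x => bubble a B α (f x) :=
  contDiff_const.mul <| (contDiff_const.add (contDiff_const.mul hf)).rpow_const_of_ne
    fun x => (one_add_mul_sq_pos hB (f x)).ne'

lemma flux_bubble {n k : ℕ} {D : ℝ} (hk : 1 ≤ k) (hkn : k ≤ n) (hB : 0 ≤ B)
    (hD : 2 * a * α * B = -D) (hD0 : 0 ≤ D) {t : ℝ} (ht : 0 ≤ t) :
    flux n k (bubble a B α) t = -(D ^ k * (t ^ n * (1 + B * t ^ 2) ^ ((α - 1) * k))) := by
  set S := 1 + B * t ^ 2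
  have hS := one_add_mul_sq_pos hB t
  have hderiv : deriv (bubble a B α) t = -(D * t * S ^ (α - 1)) := by
    rw [(hasDerivAt_bubble hB t).deriv, hD]; ring
  have hnonneg : 0 ≤ D * t * S ^ (α - 1) := by positivity
  calc flux n k (bubble a B α) t
      = -(t ^ (n - k) * (D * t * S ^ (α - 1)) ^ (k - 1 + 1)) := by
        rw [flux, hderiv, abs_neg, abs_of_nonneg hnonneg, pow_succ]; ring
    _ = -(D ^ k * ((t ^ (n - k) * t ^ k) * (S ^ (α - 1)) ^ k)) := by
        rw [Nat.sub_add_cancel hk, mul_pow, mul_pow]; ring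
    _ = -(D ^ k * (t ^ n * S ^ ((α - 1) * k))) := by
        rw [← pow_add, Nat.sub_add_cancel hkn, ← rpow_natCast (S ^ (α - 1)), ← rpow_mul hS.le]

lemma hasDerivAt_flux_bubble {n k : ℕ} {D : ℝ} (hk : 1 ≤ k) (hkn : k ≤ n) (hB : 0 ≤ B)
    (hD : 2 * a * α * B = -D) (hD0 : 0 ≤ D) (hγ : 2 * ((α - 1) * k) = -n) {r : ℝ} (hr : 0 < r) :
    HasDerivAt (flux n k (bubble a B α))
      (-(D ^ k * n * r ^ (n - 1) * (1 + B * r ^ 2) ^ ((α - 1) * k - 1))) r := by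
  set γ := (α - 1) * k
  have hS := one_add_mul_sq_pos hB r
  have hflux : flux n k (bubble a B α) =ᶠ[nhds r]
      fun t => -(D ^ k * (t ^ n * (1 + B * t ^ 2) ^ γ)) := by
    filter_upwards [Ioi_mem_nhds hr] with t ht
    exact flux_bubble hk hkn hB hD hD0 (le_of_lt ht)
  refine HasDerivAt.congr_of_eventuallyEq ?_ hflux
  refine (((hasDerivAt_pow n r).mul (hasDerivAt_one_add_mul_sq_rpow hB γ r)).const_mul (D ^ k)
    ).neg.congr_deriv ?_
  have hrn : r ^ n = r ^ (n - 1) * r := by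
    rw [← pow_succ, Nat.sub_add_cancel (hk.trans hkn)]
  have hSγ : (1 + B * r ^ 2) ^ γ = (1 + B * r ^ 2) ^ (γ - 1) * (1 + B * r ^ 2) := by
    rw [← rpow_add_one hS.ne', sub_add_cancel]
  rw [hrn, hSγ]
  linear_combination (-(D ^ k * r ^ (n - 1) * (1 + B * r ^ 2) ^ (γ - 1) * B * r ^ 2)) * hγ

theorem isRegularSolution_bubble {n k : ℕ} {p D : ℝ} (hk : 1 ≤ k) (hkn : k ≤ n) (ha : 0 < a)
    (hB : 0 ≤ B) (hD : 2 * a * α * B = -D) (hD0 : 0 ≤ D) (hγ : 2 * ((α - 1) * k) = -n)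
    (hαp : α * p = (α - 1) * k - 1) (hconst : D ^ k * n = k / binomC n k * a ^ p) :
    IsRegularSolution n k p a (bubble a B α) where
  contDiffOn := (contDiff_bubble_comp hB (contDiff_id.pow 2)).contDiffOn
  deriv_zero := by
    rw [((hasDerivAt_bubble hB 0).hasDerivWithinAt).derivWithin (uniqueDiffOn_Ici 0 0 self_mem_Ici)]
    ring
  init := by simp [bubble]
  pos r _ := mul_pos ha (rpow_pos_of_pos (one_add_mul_sq_pos hB r) α)
  eqn r hr := (hasDerivAt_flux_bubble hk hkn hB hD hD0 hγ hr).congr_deriv <| by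
    rw [bubble, mul_rpow ha.le (rpow_pos_of_pos (one_add_mul_sq_pos hB r) α).le,
      ← rpow_mul (one_add_mul_sq_pos hB r).le, hαp]
    linear_combination (-(r ^ (n - 1) * (1 + B * r ^ 2) ^ ((α - 1) * k - 1))) * hconst
  radial_smooth := (contDiff_bubble_comp hB (contDiff_norm_sq ℝ)).neg

end Bubble

lemma sub_eq_of_critical {n k p : ℝ} (hnk : 0 < n - 2 * k) (hp : p = (n + 2) * k / (n - 2 * k)) :
    p - k = 2 * k * (k + 1) / (n - 2 * k) := by
  rw [hp]; field_simp; ring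

lemma rpow_one_div_sub_rpow {L p : ℝ} {k : ℕ} (hL : 0 < L) (hq : p - k ≠ 0) :
    (L ^ (1 / (p - k))) ^ p = (L ^ (1 / (p - k))) ^ k * L := by
  have hc : 0 < L ^ (1 / (p - k)) := rpow_pos_of_pos hL _
  calc (L ^ (1 / (p - k))) ^ p = (L ^ (1 / (p - k))) ^ ((k : ℝ) + (p - k)) := by ring_nf
    _ = (L ^ (1 / (p - k))) ^ k * L := by
      rw [rpow_add hc, rpow_natCast, one_div, rpow_inv_rpow hL.le hq]

lemma critical_constant {n k : ℕ} {p ρ L : ℝ} (hk : k ≠ 0) (hnk : (0 : ℝ) < n - 2 * k)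
    (hρ : 0 < ρ) (hL : 0 < L) (hq : p - k = 2 * k * (k + 1) / (n - 2 * k)) :
    (L ^ (1 / (p - k)) * ρ * (ρ ^ (((k : ℝ) + 1) / (n - 2 * k))) ^ 2 / (n : ℝ) ^ (1 / (k : ℝ))) ^ k
      * n = L⁻¹ * (L ^ (1 / (p - k)) * ρ) ^ p := by
  set c := L ^ (1 / (p - k))
  have hn : (0 : ℝ) < n := by have : (0 : ℝ) ≤ k := k.cast_nonneg; linarith
  have hη : ((n : ℝ) ^ (1 / (k : ℝ))) ^ k = n := by
    rw [one_div]; exact rpow_inv_natCast_pow hn.le hk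
  have hm : ((ρ ^ (((k : ℝ) + 1) / (n - 2 * k))) ^ 2) ^ k = ρ ^ (p - k) := by
    rw [← pow_mul, ← rpow_natCast, ← rpow_mul hρ.le, hq]; push_cast; field_simp
  have hc : c ^ p = c ^ k * L := rpow_one_div_sub_rpow hL (by rw [hq]; positivity)
  calc _ = c ^ k * ρ ^ k * ρ ^ (p - k) := by
        rw [div_pow, mul_pow, mul_pow, hm, hη]; field_simp
    _ = L⁻¹ * (c * ρ) ^ p := by
        rw [mul_rpow (rpow_pos_of_pos hL _).le hρ.le, hc, mul_assoc, ← rpow_natCast ρ,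
          ← rpow_add hρ, add_sub_cancel]
        field_simp

theorem explicit_regular_solution_general (n k : ℕ) (p ρ : ℝ)
    (hk1 : 1 < k) (hk2 : 2 * k < n) (hρ : 0 < ρ)
    (hp : p = ((n : ℝ) + 2) * k / ((n : ℝ) - 2 * k)) :
    IsRegularSolution n k p (((1 / (k : ℝ)) * binomC n k) ^ (1 / (p - k)) * ρ)
      (fun r => ((1 / (k : ℝ)) * binomC n k) ^ (1 / (p - k)) * ρ *
        (1 + (k : ℝ) / ((n : ℝ) ^ (1 / (k : ℝ)) * ((n : ℝ) - 2 * k)) *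
            (ρ ^ (((k : ℝ) + 1) / ((n : ℝ) - 2 * k)) * r) ^ 2)
          ^ (-((n : ℝ) - 2 * k) / (2 * k))) := by
  have hk0 : (0 : ℝ) < k := Nat.cast_pos.2 (by omega)
  have hnk : (0 : ℝ) < n - 2 * k := by rw [sub_pos]; exact_mod_cast hk2
  have hC : 0 < binomC n k := Nat.cast_pos.2 (Nat.choose_pos (by omega))
  set c := (1 / (k : ℝ) * binomC n k) ^ (1 / (p - k))
  set m := ρ ^ (((k : ℝ) + 1) / ((n : ℝ) - 2 * k))
  set η := (n : ℝ) ^ (1 / (k : ℝ))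
  set K := (k : ℝ) / (η * ((n : ℝ) - 2 * k))
  set α := -((n : ℝ) - 2 * k) / (2 * k)
  have hu : (fun r => c * ρ * (1 + K * (m * r) ^ 2) ^ α) = bubble (c * ρ) (K * m ^ 2) α := by
    funext r; rw [bubble, mul_pow, ← mul_assoc]
  rw [hu]
  refine isRegularSolution_bubble hk1.le (by omega) (by positivity) (by positivity)
    (D := c * ρ * m ^ 2 / η) ?_ (by positivity) ?_ ?_ ?_
  · simp only [K, α]; field_simp
  · simp only [α]; field_simp; ring
  · simp only [α]; rw [hp]; field_simp; ring
  · rw [critical_constant (by omega) hnk hρ (by positivity) (sub_eq_of_critical hnk hp)]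
    congr 1; rw [one_div_mul_eq_div, inv_div]

/-- in the critical case, the explicit function `u_ρ` is a regular solution
of the initial value problem. -/
theorem explicit_regular_solution (n k : ℕ) (p ρ : ℝ)
    (hn : 3 ≤ n) (hk1 : 1 < k) (hk2 : 2 * k < n) (hρ : 0 < ρ)
    (hp : p = ((n : ℝ) + 2) * k / ((n : ℝ) - 2 * k)) :
    IsRegularSolution n k p (((1 / (k : ℝ)) * binomC n k) ^ (1 / (p - k)) * ρ)
      (fun r => ((1 / (k : ℝ)) * binomC n k) ^ (1 / (p - k)) * ρ *
        (1 + (k : ℝ) / ((n : ℝ) ^ (1 / (k : ℝ)) * ((n : ℝ) - 2 * k)) *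
            (ρ ^ (((k : ℝ) + 1) / ((n : ℝ) - 2 * k)) * r) ^ 2)
          ^ (-((n : ℝ) - 2 * k) / (2 * k))) :=
  explicit_regular_solution_general n k p ρ hk1 hk2 hρ hp

end KHessianPaper
end
end

section
/- Let k ≥ 2 be an integer and define, for t > k, γ(t) = (2t + 2√(t(t-k)) − k)/k and f(t) = ((2k+1)(t + γ(t)) − (γ(t) + k))/(t − k). Then f is strictly decreasing on (k, ∞), f(t) → ∞ as t → k⁺, and f(t) → 2k + 9 as t → ∞. -/
open MeasureTheory Real Set Filter Asymptotics

noncomputable section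

namespace KHessianPaper

/-- The function `γ(t) = (2t + 2√(t(t-k)) - k)/k`. -/
def gamFn (k : ℕ) (t : ℝ) : ℝ := (2 * t + 2 * Real.sqrt (t * (t - (k : ℝ))) - (k : ℝ)) / (k : ℝ)

/-- The function `f(t) = ((2k+1)(t + γ(t)) - (γ(t) + k))/(t - k)`. -/
def fJL (k : ℕ) (t : ℝ) : ℝ :=
  ((2 * (k : ℝ) + 1) * (t + gamFn k t) - (gamFn k t + (k : ℝ))) / (t - (k : ℝ))

lemma sqrt_key {K t : ℝ} (hK : 0 < K) (ht : K < t) :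
    Real.sqrt (t * (t - K)) = (t - K) * Real.sqrt (1 + K / (t - K)) := by
  have hs : 0 < t - K := by linarith
  rw [show t * (t - K) = (t - K) ^ 2 * (1 + K / (t - K)) by field_simp; ring,
    Real.sqrt_mul (sq_nonneg _), Real.sqrt_sq hs.le]

lemma fJL_eq {k : ℕ} (hk : 2 ≤ k) {t : ℝ} (ht : (k : ℝ) < t) :
    fJL k t = (2 * (k : ℝ) + 5) + (2 * (k : ℝ) ^ 2 + 2 * k) / (t - k)
      + 4 * Real.sqrt (1 + (k : ℝ) / (t - k)) := by
  have hK : (0 : ℝ) < k := by exact_mod_cast Nat.pos_of_ne_zero (by omega)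
  have hs : (0 : ℝ) < t - k := by linarith
  unfold fJL gamFn
  rw [sqrt_key hK ht]
  field_simp
  ring

/-- `f` is strictly decreasing on `(k,∞)`, blows up at `k⁺`,
and tends to `2k+9` at infinity. -/
theorem fJL_properties (k : ℕ) (hk : 2 ≤ k) :
    StrictAntiOn (fJL k) (Ioi (k : ℝ)) ∧
    Tendsto (fJL k) (nhdsWithin (k : ℝ) (Ioi (k : ℝ))) atTop ∧
    Tendsto (fJL k) atTop (nhds (2 * (k : ℝ) + 9)) := by
  have hK : (0 : ℝ) < k := by exact_mod_cast Nat.pos_of_ne_zero (by omega)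
  have hc : (0 : ℝ) < 2 * (k : ℝ) ^ 2 + 2 * k := by positivity
  refine ⟨?_, ?_, ?_⟩
  · intro a ha b hb hab
    have hsa : (0 : ℝ) < a - k := by simpa using sub_pos.mpr (mem_Ioi.mp ha)
    have hsb : (0 : ℝ) < b - k := by simpa using sub_pos.mpr (mem_Ioi.mp hb)
    rw [fJL_eq hk (mem_Ioi.mp ha), fJL_eq hk (mem_Ioi.mp hb)]
    have h1 : (2 * (k : ℝ) ^ 2 + 2 * k) / (b - k)
        < (2 * (k : ℝ) ^ 2 + 2 * k) / (a - k) :=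
      div_lt_div_of_pos_left hc hsa (by linarith)
    have h2 : Real.sqrt (1 + (k : ℝ) / (b - k)) ≤ Real.sqrt (1 + (k : ℝ) / (a - k)) := by
      apply Real.sqrt_le_sqrt
      have : (k : ℝ) / (b - k) ≤ (k : ℝ) / (a - k) :=
        div_le_div_of_nonneg_left hK.le hsa (by linarith)
      linarith
    linarith
  · have hmain : Tendsto (fun t : ℝ => (2 * (k : ℝ) ^ 2 + 2 * k) / (t - k))
        (nhdsWithin (k : ℝ) (Ioi (k : ℝ))) atTop := by
      have h1 : Tendsto (fun t : ℝ => t - (k : ℝ))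
          (nhdsWithin (k : ℝ) (Ioi (k : ℝ))) (nhdsWithin 0 (Ioi 0)) := by
        apply tendsto_nhdsWithin_of_tendsto_nhds_of_eventually_within
        · have h0 : Tendsto (fun t : ℝ => t - (k : ℝ)) (nhds (k : ℝ)) (nhds ((k : ℝ) - k)) :=
            (continuous_id.sub continuous_const).tendsto _
          simpa using h0.mono_left nhdsWithin_le_nhds
        · filter_upwards [self_mem_nhdsWithin] with t ht
          exact sub_pos.mpr (mem_Ioi.mp ht)
      have h2 : Tendsto (fun s : ℝ => (2 * (k : ℝ) ^ 2 + 2 * k) / s)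
          (nhdsWithin 0 (Ioi 0)) atTop := by
        simpa [div_eq_mul_inv] using tendsto_inv_nhdsGT_zero.const_mul_atTop hc
      exact h2.comp h1
    apply tendsto_atTop_mono' _ _ hmain
    filter_upwards [self_mem_nhdsWithin] with t ht
    rw [fJL_eq hk (mem_Ioi.mp ht)]
    have := Real.sqrt_nonneg (1 + (k : ℝ) / (t - k))
    nlinarith
  · have hev : ∀ᶠ t : ℝ in atTop, fJL k t = (2 * (k : ℝ) + 5)
        + (2 * (k : ℝ) ^ 2 + 2 * k) / (t - k)
        + 4 * Real.sqrt (1 + (k : ℝ) / (t - k)) := by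
      filter_upwards [eventually_gt_atTop (k : ℝ)] with t ht
      exact fJL_eq hk ht
    have hsub : Tendsto (fun t : ℝ => t - (k : ℝ)) atTop atTop :=
      tendsto_atTop_add_const_right _ _ tendsto_id
    have h1 : Tendsto (fun t : ℝ => (2 * (k : ℝ) ^ 2 + 2 * k) / (t - k)) atTop (nhds 0) :=
      Tendsto.div_atTop tendsto_const_nhds hsub
    have h2 : Tendsto (fun t : ℝ => (k : ℝ) / (t - k)) atTop (nhds 0) :=
      Tendsto.div_atTop tendsto_const_nhds hsub
    have h3 : Tendsto (fun t : ℝ => 4 * Real.sqrt (1 + (k : ℝ) / (t - k))) atTop (nhds 4) := by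
      have : Tendsto (fun t : ℝ => Real.sqrt (1 + (k : ℝ) / (t - k))) atTop
          (nhds (Real.sqrt 1)) :=
        (Real.continuous_sqrt.tendsto 1).comp (by simpa using (tendsto_const_nhds.add h2))
      simpa [Real.sqrt_one] using this.const_mul 4
    have hsum : Tendsto (fun t : ℝ => (2 * (k : ℝ) + 5)
        + (2 * (k : ℝ) ^ 2 + 2 * k) / (t - k) + 4 * Real.sqrt (1 + (k : ℝ) / (t - k)))
        atTop (nhds ((2 * (k : ℝ) + 5) + 0 + 4)) :=
      ((tendsto_const_nhds.add h1).add h3)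
    rw [show (2 * (k : ℝ) + 9) = (2 * (k : ℝ) + 5) + 0 + 4 by ring]
    exact hsum.congr' (hev.mono fun t h => h.symm)

end KHessianPaper
end
end
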